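/- arXiv:math/0505422 — 2 statements merged into one kernel-verified Lean document; each statement's English description precedes it below -/
import Mathlib

section
/- For a fixed integer a and fixed integer k ≥ 1, the limit as N → ∞ (over odd N) of N^(-k) times the sum over N-th roots of unity ζ ≠ 1 of ζ^((N-1)/2 + a) / (1-ζ)^k equals (1 - 2^(-k+1)) · B_k / k!, where B_k is the k-th Bernoulli number defined by -u/sinh(u) = Σ_k ((2^k - 2)/k!) B_k u^k. -/
/-!
Write the root `ζ = e^{2πip/N}` as `e^{2πij/N}` with `j ∈ (-N/2, N/2)`. For odd `N`,
`ζ^{(N-1)/2}` is `(-1)^j` up to a factor tending to `1`, and `N(1 - ζ) → -2πij`, so the `j`-th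
normalized term tends to `(-1)^j / (-2πij)^k`; Jordan's inequality bounds it by `(4|j|)^{-k}`. For
`k ≥ 2` dominated convergence gives `∑_{j ≠ 0} (-1)^j / (-2πij)^k`, the Fourier series of the
Bernoulli polynomial `B_k` at `1/2`, and `B_k(1/2) = (2^{1-k} - 1) B_k`.

For `k = 1` the sum is computed exactly: pairing `ζ` with `ζ⁻¹` gives
`∑_{ζ ≠ 1} 1/(1 - ζ) = (N-1)/2`, and expanding `(1 - ζ^m)/(1 - ζ)` as a geometric sum shows that
the sum is `a - 1`.
-/

open Nat Complex Filter Finset Topology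

noncomputable def rou (N p : ℕ) : ℂ := Complex.exp (2 * Real.pi * Complex.I * p / N)

namespace RootsOfUnitySum

section PrimitiveRoot

variable {K : Type*} [Field K] {ζ : K} {N : ℕ}

theorem sum_Ico_pow_pow (hζ : IsPrimitiveRoot ζ N) {i : ℕ} (hi : 0 < i) (hiN : i < N) :
    ∑ p ∈ Ico 1 N, (ζ ^ p) ^ i = -1 := by
  have hfull : ∑ p ∈ range N, (ζ ^ i) ^ p = 0 := by
    rw [geom_sum_eq (hζ.pow_ne_one_of_pos_of_lt hi.ne' hiN), ← pow_mul, mul_comm, pow_mul,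
      hζ.pow_eq_one, one_pow, sub_self, zero_div]
  rw [range_eq_Ico, sum_eq_sum_Ico_succ_bot (by omega)] at hfull
  simp_rw [← pow_mul, mul_comm _ i, pow_mul]
  linear_combination hfull

theorem two_mul_sum_Ico_inv_one_sub (hζ : IsPrimitiveRoot ζ N) (hN : N ≠ 0) :
    2 * ∑ p ∈ Ico 1 N, (1 - ζ ^ p)⁻¹ = N - 1 := by
  have hreflect :
      ∑ p ∈ Ico 1 N, (1 - ζ ^ (N - p))⁻¹ = ∑ p ∈ Ico 1 N, (1 - ζ ^ p)⁻¹ := by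
    simpa using sum_Ico_reflect (fun p => (1 - ζ ^ p)⁻¹) 1 (le_succ N)
  -- `p ↦ N - p` inverts `ζ ^ p`, and `(1 - x)⁻¹ + (1 - x⁻¹)⁻¹ = 1`.
  have hpair : ∀ p ∈ Ico 1 N, (1 - ζ ^ p)⁻¹ + (1 - ζ ^ (N - p))⁻¹ = 1 := by
    intro p hp
    obtain ⟨hp1, hpN⟩ := mem_Ico.1 hp
    have hne : ζ ^ p ≠ 1 := hζ.pow_ne_one_of_pos_of_lt (by omega) hpN
    have hmul : ζ ^ (N - p) * ζ ^ p = 1 := by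
      rw [← pow_add, Nat.sub_add_cancel hpN.le, hζ.pow_eq_one]
    have h1 : 1 - ζ ^ p ≠ 0 := sub_ne_zero.mpr hne.symm
    have h2 : 1 - ζ ^ (N - p) ≠ 0 := by
      intro h
      rw [← sub_eq_zero.mp h, one_mul] at hmul
      exact hne hmul
    field_simp
    linear_combination (-1 : K) * hmul
  calc 2 * ∑ p ∈ Ico 1 N, (1 - ζ ^ p)⁻¹
      = ∑ p ∈ Ico 1 N, ((1 - ζ ^ p)⁻¹ + (1 - ζ ^ (N - p))⁻¹) := by
        rw [sum_add_distrib, hreflect, two_mul]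
    _ = N - 1 := by
        rw [sum_congr rfl hpair, sum_const, card_Ico, nsmul_one, Nat.cast_sub (by omega)]
        simp

theorem two_mul_sum_Ico_pow_div_one_sub (hζ : IsPrimitiveRoot ζ N) {m : ℕ} (hm : 1 ≤ m)
    (hmN : m ≤ N) :
    2 * ∑ p ∈ Ico 1 N, (ζ ^ p) ^ m / (1 - ζ ^ p) = 2 * m - (N + 1) := by
  have hN : N ≠ 0 := by omega
  have hdiff : ∑ p ∈ Ico 1 N, (1 - (ζ ^ p) ^ m) / (1 - ζ ^ p) = N - m := by
    have hgeom : ∀ p ∈ Ico 1 N,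
        (1 - (ζ ^ p) ^ m) / (1 - ζ ^ p) = ∑ i ∈ range m, (ζ ^ p) ^ i := by
      intro p hp
      have hne : 1 - ζ ^ p ≠ 0 :=
        sub_ne_zero.mpr (hζ.pow_ne_one_of_pos_of_lt (by grind) (mem_Ico.1 hp).2).symm
      rw [div_eq_iff hne, mul_comm, mul_neg_geom_sum]
    rw [sum_congr rfl hgeom, sum_comm, range_eq_Ico, sum_eq_sum_Ico_succ_bot (by omega),
      sum_congr rfl fun i hi => sum_Ico_pow_pow hζ (mem_Ico.1 hi).1 (by grind)]
    simp [Nat.cast_sub (by omega : 1 ≤ m), Nat.cast_sub (by omega : 1 ≤ N)]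
  have hsplit : ∑ p ∈ Ico 1 N, (ζ ^ p) ^ m / (1 - ζ ^ p)
      = ∑ p ∈ Ico 1 N, (1 - ζ ^ p)⁻¹
        - ∑ p ∈ Ico 1 N, (1 - (ζ ^ p) ^ m) / (1 - ζ ^ p) := by
    rw [← sum_sub_distrib]
    refine sum_congr rfl fun p _ => ?_
    ring
  rw [hsplit, mul_sub, two_mul_sum_Ico_inv_one_sub hζ hN, hdiff]
  ring

end PrimitiveRoot

theorem isPrimitiveRoot_rou_one {N : ℕ} (hN : N ≠ 0) : IsPrimitiveRoot (rou N 1) N := by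
  simpa [rou] using isPrimitiveRoot_exp N hN

theorem rou_eq_pow (N p : ℕ) : rou N p = rou N 1 ^ p := by
  rw [rou, rou, ← exp_nat_mul]
  ring_nf

theorem tendsto_mul_sum_pow_div_one_sub (a : ℤ) :
    Tendsto (fun N : ℕ => 1 / (N : ℂ) *
        ∑ p ∈ Ico 1 N, rou N p ^ ((((N - 1) / 2 : ℕ) : ℤ) + a) / (1 - rou N p))
      (atTop ⊓ 𝓟 {N | Odd N}) (𝓝 0) := by
  have hev : (fun N : ℕ => 1 / (N : ℂ) *
        ∑ p ∈ Ico 1 N, rou N p ^ ((((N - 1) / 2 : ℕ) : ℤ) + a) / (1 - rou N p))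
      =ᶠ[atTop ⊓ 𝓟 {N | Odd N}] fun N : ℕ => ((a : ℂ) - 1) / N := by
    rw [EventuallyEq, eventually_inf_principal]
    filter_upwards [eventually_ge_atTop (2 * a.natAbs + 2)] with N hN ⟨t, ht⟩
    have hm : (((N - 1) / 2 : ℕ) : ℤ) + a = (((t : ℤ) + a).toNat : ℕ) := by omega
    have hsum := two_mul_sum_Ico_pow_div_one_sub (isPrimitiveRoot_rou_one (N := N) (by omega))
      (m := ((t : ℤ) + a).toNat) (by omega) (by omega)
    simp only [hm, zpow_natCast]
    rw [sum_congr rfl fun p _ => by rw [rou_eq_pow N p], one_div_mul_eq_div]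
    congr 1
    have hmC : ((((t : ℤ) + a).toNat : ℕ) : ℂ) = t + a := by
      exact_mod_cast (show ((((t : ℤ) + a).toNat : ℕ) : ℤ) = t + a by omega)
    have hNC : (N : ℂ) = 2 * t + 1 := by rw [ht]; push_cast; ring
    rw [hmC, hNC] at hsum
    linear_combination hsum / 2
  refine Tendsto.congr' hev.symm ?_
  simpa [div_eq_mul_inv] using
    (tendsto_inv_atTop_nhds_zero_nat.const_mul ((a : ℂ) - 1)).mono_left inf_le_left

noncomputable def rouInt (N : ℕ) (j : ℤ) : ℂ := exp (2 * Real.pi * I * j / N)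

theorem rouInt_natCast (N p : ℕ) : rouInt N p = rou N p := by
  simp [rouInt, rou]

theorem rouInt_sub_self {N : ℕ} (hN : N ≠ 0) (j : ℤ) : rouInt N (j - N) = rouInt N j := by
  have hN' : (N : ℂ) ≠ 0 := Nat.cast_ne_zero.mpr hN
  rw [rouInt, rouInt, Int.cast_sub, Int.cast_natCast, mul_sub, sub_div,
    mul_div_cancel_right₀ _ hN', exp_sub, exp_two_pi_mul_I, div_one]

theorem rouInt_eq_exp_I_mul (N : ℕ) (j : ℤ) :
    rouInt N j = exp (I * (2 * Real.pi * j / N : ℝ)) := by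
  rw [rouInt]; push_cast; ring_nf

theorem norm_rouInt (N : ℕ) (j : ℤ) : ‖rouInt N j‖ = 1 := by
  rw [rouInt_eq_exp_I_mul, norm_exp_I_mul_ofReal]

/-- Jordan's inequality `sin x ≥ 2x/π` on `[0, π/2]` bounds the chord `|1 - ζ|` from below. -/
theorem four_mul_abs_le_norm_mul_one_sub_rouInt {N : ℕ} {j : ℤ} (hj : 2 * j.natAbs ≤ N) :
    4 * |(j : ℝ)| ≤ ‖(N : ℂ) * (1 - rouInt N j)‖ := by
  rcases Nat.eq_zero_or_pos N with rfl | hN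
  · simp [show j = 0 by omega]
  have hN' : (0 : ℝ) < N := by exact_mod_cast hN
  have hjN : 2 * |(j : ℝ)| ≤ N := by
    have habs : ((j.natAbs : ℕ) : ℝ) = |(j : ℝ)| := by simp
    rw [← habs]; exact_mod_cast hj
  have hx : |Real.pi * j / N| ≤ Real.pi / 2 := by
    rw [abs_div, abs_mul, abs_of_pos Real.pi_pos, Nat.abs_cast, div_le_div_iff₀ hN' two_pos]
    nlinarith [Real.pi_pos]
  have hchord : ‖1 - rouInt N j‖ = 2 * |Real.sin (Real.pi * j / N)| := by
    rw [norm_sub_rev, rouInt_eq_exp_I_mul, norm_exp_I_mul_ofReal_sub_one, norm_mul,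
      Real.norm_ofNat, Real.norm_eq_abs]
    ring_nf
  have hjordan := Real.mul_abs_le_abs_sin hx
  rw [abs_div, abs_mul, abs_of_pos Real.pi_pos, Nat.abs_cast] at hjordan
  rw [norm_mul, Complex.norm_natCast, hchord]
  calc 4 * |(j : ℝ)| = 2 * N * (2 / Real.pi * (Real.pi * |(j : ℝ)| / N)) := by
        field_simp; ring
    _ ≤ N * (2 * |Real.sin (Real.pi * j / N)|) := by nlinarith

/-- The `p`-th summand of the normalized sum, indexed by the representative `j ∈ (-N/2, N/2)` of
`p mod N`. -/
noncomputable def term (k : ℕ) (a : ℤ) (N : ℕ) (j : ℤ) : ℂ :=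
  if j ≠ 0 ∧ 2 * j.natAbs < N then
    rouInt N j ^ ((((N - 1) / 2 : ℕ) : ℤ) + a) / ((N : ℂ) * (1 - rouInt N j)) ^ k
  else 0

theorem norm_term_le (k : ℕ) (a : ℤ) (N : ℕ) (j : ℤ) :
    ‖term k a N j‖ ≤ 1 / (4 * |(j : ℝ)|) ^ k := by
  unfold term
  split_ifs with hj
  · rw [norm_div, norm_zpow, norm_rouInt, one_zpow, norm_pow]
    have hpos : 0 < 4 * |(j : ℝ)| := by simp [hj.1]
    gcongr
    exact four_mul_abs_le_norm_mul_one_sub_rouInt hj.2.le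
  · rw [norm_zero]; positivity

theorem summable_one_div_four_mul_abs_pow {k : ℕ} (hk : 2 ≤ k) :
    Summable fun j : ℤ => 1 / (4 * |(j : ℝ)|) ^ k := by
  have h := ((Real.summable_one_div_int_pow (p := k)).mpr (by omega)).abs.mul_left (1 / 4 ^ k)
  refine h.congr fun j => ?_
  rw [abs_div, abs_one, abs_pow, mul_pow]
  ring

theorem mul_sum_eq_tsum_term (k : ℕ) (a : ℤ) {N : ℕ} (hN : Odd N) :
    1 / (N : ℂ) ^ k *
        ∑ p ∈ Ico 1 N, rou N p ^ ((((N - 1) / 2 : ℕ) : ℤ) + a) / (1 - rou N p) ^ k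
      = ∑' j : ℤ, term k a N j := by
  obtain ⟨t, ht⟩ := hN
  set s := (Ioo (-(N : ℤ)) N).filter fun j => j ≠ 0 ∧ 2 * j.natAbs < N
  have hsupp : ∀ j ∉ s, term k a N j = 0 := fun j hj => by
    rw [term, if_neg]
    rintro ⟨hj0, hjN⟩
    exact hj (by simp only [s, mem_filter, mem_Ioo]; omega)
  rw [tsum_eq_sum hsupp, mul_sum]
  refine sum_nbij' (fun p => if 2 * p < N then (p : ℤ) else p - N)
    (fun j => if 0 ≤ j then j.toNat else (j + N).toNat) ?_ ?_ ?_ ?_ ?_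
  all_goals simp only [s, mem_filter, mem_Ioo, mem_Ico]
  · intro p hp; split_ifs <;> omega
  · intro j hj; split_ifs <;> omega
  · intro p hp; split_ifs <;> omega
  · intro j hj; split_ifs <;> omega
  · intro p hp
    split_ifs
    · rw [term, if_pos (by omega), rouInt_natCast, mul_pow]
      ring
    · rw [term, if_pos (by omega), rouInt_sub_self (by omega), rouInt_natCast, mul_pow]
      ring

theorem tendsto_nat_mul_one_sub_exp_div (c : ℂ) :
    Tendsto (fun N : ℕ => (N : ℂ) * (1 - exp (c / N))) atTop (𝓝 (-c)) := by
  have hderiv : HasDerivAt (fun z => exp (c * z)) c 0 := by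
    simpa using ((hasDerivAt_id (0 : ℂ)).const_mul c).cexp
  have hinv : Tendsto (fun N : ℕ => (N : ℂ)⁻¹) atTop (𝓝[≠] 0) :=
    tendsto_nhdsWithin_iff.mpr ⟨tendsto_inv_atTop_nhds_zero_nat,
      (eventually_ne_atTop 0).mono fun N hN => by simpa using hN⟩
  refine (hderiv.tendsto_slope_zero.comp hinv).neg.congr fun N => ?_
  simp only [Function.comp_apply, inv_inv, zero_add, mul_zero, exp_zero, smul_eq_mul]
  ring_nf

-- At `j = 0` this is `1 / 0 = 0` when `k ≠ 0`, matching the excluded term `j = 0` of `term`.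
noncomputable def limitTerm (k : ℕ) (j : ℤ) : ℂ := (-1) ^ j / (-(2 * Real.pi * I * j)) ^ k

theorem rouInt_zpow_half_add {N t : ℕ} (hN : N = 2 * t + 1) (j a : ℤ) :
    rouInt N j ^ ((t : ℤ) + a) = (-1) ^ j * exp ((2 * a - 1) * Real.pi * I * j / N) := by
  have hN' : (N : ℂ) ≠ 0 := by rw [hN]; exact_mod_cast (by omega : 2 * t + 1 ≠ 0)
  rw [rouInt, ← exp_int_mul, ← exp_pi_mul_I, ← exp_int_mul, ← exp_add]
  congr 1
  field_simp
  rw [hN]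
  push_cast
  ring

theorem tendsto_term {k : ℕ} (hk : k ≠ 0) (a j : ℤ) :
    Tendsto (fun N => term k a N j) (atTop ⊓ 𝓟 {N | Odd N}) (𝓝 (limitTerm k j)) := by
  rcases eq_or_ne j 0 with rfl | hj
  · simpa [term, limitTerm, zero_pow hk] using tendsto_const_nhds
  set c : ℂ := 2 * Real.pi * I * j
  have hc0 : c ≠ 0 := by simp [c, hj, Real.pi_ne_zero]
  have hnum : Tendsto (fun N : ℕ => (-1 : ℂ) ^ j * exp ((2 * a - 1) * Real.pi * I * j / N))
      atTop (𝓝 ((-1) ^ j)) := by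
    have h0 : Tendsto (fun N : ℕ => (2 * a - 1) * Real.pi * I * j / N) atTop (𝓝 0) := by
      simpa [div_eq_mul_inv] using
        tendsto_one_div_atTop_nhds_zero_nat.const_mul ((2 * a - 1) * Real.pi * I * j)
    simpa using ((continuous_exp.tendsto 0).comp h0).const_mul ((-1 : ℂ) ^ j)
  have hden : Tendsto (fun N : ℕ => ((N : ℂ) * (1 - rouInt N j)) ^ k) atTop (𝓝 ((-c) ^ k)) :=
    (tendsto_nat_mul_one_sub_exp_div c).pow k
  refine ((hnum.div hden (pow_ne_zero _ (neg_ne_zero.mpr hc0))).mono_left inf_le_left).congr' ?_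
  rw [EventuallyEq, eventually_inf_principal]
  filter_upwards [eventually_gt_atTop (2 * j.natAbs)] with N hN ⟨t, ht⟩
  rw [term, if_pos ⟨hj, hN⟩, show (N - 1) / 2 = t by omega, rouInt_zpow_half_add ht]
  rfl

theorem hasSum_limitTerm {k : ℕ} (hk : 2 ≤ k) :
    HasSum (limitTerm k) ((1 - (2 : ℂ) ^ (-(k : ℤ) + 1)) * bernoulli' k / k !) := by
  have h := (hasSum_one_div_pow_mul_fourier_mul_bernoulliFun hk (x := 2⁻¹)
    ⟨by norm_num, by norm_num⟩).mul_left ((-(2 * Real.pi * I)) ^ k)⁻¹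
  have hvalue :
      ((-(2 * Real.pi * I)) ^ k)⁻¹ * (-(2 * Real.pi * I) ^ k / k ! * bernoulliFun k 2⁻¹)
        = (1 - (2 : ℂ) ^ (-(k : ℤ) + 1)) * bernoulli' k / k ! := by
    rw [bernoulliFun_eval_half, bernoulli'_eq_bernoulli, zpow_add₀ two_ne_zero, zpow_neg,
      zpow_natCast, neg_pow, zpow_one]
    push_cast
    field_simp
    ring_nf
    rw [mul_comm k 2, pow_mul, neg_one_sq, one_pow]
    ring
  rw [← hvalue]
  refine h.congr_fun fun j => ?_
  unfold limitTerm
  rw [fourier_coe_apply, ← exp_pi_mul_I, ← exp_int_mul, show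
      2 * (Real.pi : ℂ) * I * j * (2⁻¹ : ℝ) / (1 : ℝ) = j * (Real.pi * I) by push_cast; ring,
    show -(2 * Real.pi * I * j) = -(2 * Real.pi * I) * (j : ℂ) by ring, mul_pow, div_eq_mul_inv,
    mul_inv]
  ring

end RootsOfUnitySum

open RootsOfUnitySum in
/-- For fixed `a : ℤ` and fixed `k ≥ 1`, the limit as `N → ∞` over odd `N` of `N^(-k)` times the
sum over `N`-th roots of unity `ζ ≠ 1` of `ζ^((N-1)/2 + a) / (1-ζ)^k` equals
`(1 - 2^(-k+1)) ⬝ B_k / k!`, with the Bernoulli number convention `B₁ = 1/2`. -/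
theorem stmt2 (a : ℤ) (k : ℕ) (hk : 1 ≤ k) :
    Tendsto
      (fun N : ℕ => (1 / (N : ℂ) ^ k) *
        ∑ p ∈ Finset.Ico 1 N,
          rou N p ^ ((((N - 1) / 2 : ℕ) : ℤ) + a) / (1 - rou N p) ^ k)
      (atTop ⊓ 𝓟 {N : ℕ | Odd N})
      (𝓝 ((1 - (2 : ℂ) ^ (-(k : ℤ) + 1)) * (bernoulli' k : ℂ) / (k ! : ℂ))) := by
  rcases hk.eq_or_lt with rfl | hk2
  · simpa using tendsto_mul_sum_pow_div_one_sub a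
  have hdom := tendsto_tsum_of_dominated_convergence (summable_one_div_four_mul_abs_pow hk2)
    (tendsto_term (k := k) (by omega) a) (.of_forall fun N j => norm_term_le k a N j)
  rw [(hasSum_limitTerm hk2).tsum_eq] at hdom
  refine hdom.congr' ?_
  rw [EventuallyEq, eventually_inf_principal]
  exact .of_forall fun N hN => (mul_sum_eq_tsum_term k a hN).symm
end

section
/- For nonnegative integers a, b, c and a positive integer N, the residue at x = 0 of x^a (1+x)^(N-1+b) / ((1+x)^N - 1)^(c+1) equals (1/N) Σ_{p=0}^{a} (-1)^(a-p) C((b+p)/N, c) C(a, p), where C((b+p)/N, c) is the generalized binomial coefficient. -/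
/-!
Write `(1+x)^N - 1 = x·v` with `v(0) = N`. Expanding `x^a = ((1+x) - 1)^a` reduces the theorem to
`N·R(m, c) = C(m/N, c)`, where `R(m, c)` is the residue of `(1+x)^(N-1+m) / ((1+x)^N - 1)^(c+1)`.
Two relations give this by induction on `c`: from `(1+x)^N = 1 + ((1+x)^N - 1)`,
`R(m+N, c+1) = R(m, c+1) + R(m, c)`; and since the residue of the derivative of
`(1+x)^(m+N) / ((1+x)^N - 1)^(c+1)` vanishes, `(c+1)·N·R(m+N, c+1) = (m+N)·R(m, c)`.
Together, `(c+1)·N·R(m, c+1) = (m - c·N)·R(m, c)`, which is the recursion of `C(m/N, c)`.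
-/

open Nat Finset PowerSeries

theorem PowerSeries.eq_mul_inv_pow_of_mul_X_mul_pow_eq {K : Type*} [Field K] {f g v : K⟦X⟧}
    {n : ℕ} (hv : constantCoeff v ≠ 0) (h : g * (X * v) ^ n = X ^ n * f) : g = f * v⁻¹ ^ n := by
  rw [mul_pow, mul_left_comm] at h
  rw [← mul_left_cancel₀ (pow_ne_zero n X_ne_zero) h, mul_assoc, ← mul_pow,
    PowerSeries.mul_inv_cancel v hv, one_pow, mul_one]

namespace BinomialResidue

section CommRing

variable {R : Type*} [CommRing R]

noncomputable def geomSum (N : ℕ) : R⟦X⟧ := ∑ i ∈ range N, (1 + X) ^ i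

theorem X_mul_geomSum (N : ℕ) : X * geomSum N = (1 + X : R⟦X⟧) ^ N - 1 := by
  rw [geomSum, mul_comm, ← geom_sum_mul]
  ring

theorem constantCoeff_geomSum (N : ℕ) : constantCoeff (geomSum N : R⟦X⟧) = N := by
  simp [geomSum, map_sum]

theorem X_mul_derivative_geomSum (N : ℕ) :
    X * d⁄dX R (geomSum N) = (N : R⟦X⟧) * (1 + X) ^ (N - 1) - geomSum N := by
  have h := congrArg (d⁄dX R) (X_mul_geomSum (R := R) N)
  rw [Derivation.leibniz, map_sub, Derivation.leibniz_pow, Derivation.map_one_eq_zero,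
    map_add, Derivation.map_one_eq_zero, derivative_X] at h
  simp only [smul_eq_mul, nsmul_eq_mul, mul_one, zero_add, sub_zero] at h
  linear_combination h

end CommRing

variable {K : Type*} [Field K]

/-- The residue at `0` of `(1+x)^(N-1+m) / ((1+x)^N - 1)^(c+1)`, read off as a coefficient
via `(1+x)^N - 1 = x · geomSum N`. -/
noncomputable def residue (N m c : ℕ) : K :=
  coeff c ((1 + X) ^ (N - 1 + m) * (geomSum N)⁻¹ ^ (c + 1))

theorem residue_zero (N m : ℕ) : residue N m 0 = (N⁻¹ : K) := by
  simp [residue, constantCoeff_geomSum]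

theorem coeff_X_pow_mul_eq_sum_residue (N a b c : ℕ) :
    coeff c (X ^ a * (1 + X) ^ (N - 1 + b) * (geomSum N : K⟦X⟧)⁻¹ ^ (c + 1)) =
      ∑ p ∈ range (a + 1), (-1 : K) ^ (a - p) * residue N (b + p) c * a.choose p := by
  rw [show (X : K⟦X⟧) ^ a = ((1 + X) + (-1)) ^ a by ring, add_pow, sum_mul, sum_mul, map_sum]
  refine sum_congr rfl fun p _ => ?_
  have h : (1 + X : K⟦X⟧) ^ p * (-1) ^ (a - p) * (a.choose p : K⟦X⟧) * (1 + X) ^ (N - 1 + b) *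
      (geomSum N)⁻¹ ^ (c + 1) = C ((-1) ^ (a - p) * (a.choose p : K)) *
        ((1 + X) ^ (N - 1 + (b + p)) * (geomSum N)⁻¹ ^ (c + 1)) := by
    rw [map_mul, map_pow, map_neg, map_one, map_natCast]
    ring
  rw [h, coeff_C_mul, residue]
  ring

variable {N : ℕ} (hN : (N : K) ≠ 0)
include hN

theorem geomSum_mul_inv : geomSum N * (geomSum N : K⟦X⟧)⁻¹ = 1 :=
  PowerSeries.mul_inv_cancel _ (by rwa [constantCoeff_geomSum])

theorem residue_add_self (m c : ℕ) :
    residue N (m + N) (c + 1) = residue N m (c + 1) + (residue N m c : K) := by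
  have h : (1 + X : K⟦X⟧) ^ (N - 1 + (m + N)) * (geomSum N)⁻¹ ^ (c + 2) =
      (1 + X) ^ (N - 1 + m) * (geomSum N)⁻¹ ^ (c + 2) +
        X * ((1 + X) ^ (N - 1 + m) * (geomSum N)⁻¹ ^ (c + 1)) := by
    linear_combination
      (-(1 + X : K⟦X⟧) ^ (N - 1 + m) * (geomSum N)⁻¹ ^ (c + 2)) * X_mul_geomSum (R := K) N +
        X * (1 + X : K⟦X⟧) ^ (N - 1 + m) * (geomSum N)⁻¹ ^ (c + 1) * geomSum_mul_inv hN
  rw [residue, residue, residue, h, map_add, coeff_succ_X_mul]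

theorem succ_mul_residue_add_self (m c : ℕ) :
    (c + 1) * N * residue N (m + N) (c + 1) = (m + N) * (residue N m c : K) := by
  obtain ⟨n, rfl⟩ : ∃ n, N = n + 1 := Nat.exists_eq_succ_of_ne_zero (by rintro rfl; simp at hN)
  set v : K⟦X⟧ := geomSum (n + 1)
  set H : K⟦X⟧ := (1 + X) ^ (n + m + 1) * v⁻¹ ^ (c + 1)
  have hv := X_mul_derivative_geomSum (R := K) (n + 1)
  rw [Nat.add_sub_cancel] at hv
  have hXH : X * d⁄dX K H =
      C ((m + (n + 1) : ℕ) : K) * (X * ((1 + X) ^ (n + m) * v⁻¹ ^ (c + 1))) -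
        C (((c + 1) * (n + 1) : ℕ) : K) *
          ((1 + X) ^ (n + 1 - 1 + (m + (n + 1))) * v⁻¹ ^ (c + 1 + 1)) +
        C ((c + 1 : ℕ) : K) * H := by
    simp only [H, Derivation.leibniz, Derivation.leibniz_pow, derivative_inv', map_add,
      Derivation.map_one_eq_zero, derivative_X, map_natCast, smul_eq_mul, nsmul_eq_mul,
      Nat.add_sub_cancel, zero_add, mul_one]
    push_cast at hv ⊢
    linear_combination (-(c + 1) * (1 + X : K⟦X⟧) ^ (n + m + 1) * v⁻¹ ^ (c + 2)) * hv +
      (c + 1) * (1 + X : K⟦X⟧) ^ (n + m + 1) * v⁻¹ ^ (c + 1) * geomSum_mul_inv hN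
  have hcoeff := congrArg (coeff (c + 1)) hXH
  rw [coeff_succ_X_mul, coeff_derivative, map_add, map_sub, coeff_C_mul, coeff_C_mul,
    coeff_C_mul, coeff_succ_X_mul] at hcoeff
  simp only [residue]
  push_cast at hcoeff ⊢
  linear_combination hcoeff

theorem succ_mul_residue_succ (m c : ℕ) :
    (c + 1) * N * residue N m (c + 1) = (m - c * N) * (residue N m c : K) := by
  linear_combination succ_mul_residue_add_self hN m c - (c + 1) * N * residue_add_self hN m c

theorem mul_residue [CharZero K] (m c : ℕ) :
    N * residue N m c = (descPochhammer K c).eval ((m : K) / N) / c ! := by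
  induction c with
  | zero => simp [residue_zero, hN]
  | succ c ih =>
    have hfac : (c ! : K) ≠ 0 := Nat.cast_ne_zero.2 c.factorial_ne_zero
    rw [eq_div_iff hfac] at ih
    rw [descPochhammer_succ_eval, ← ih, factorial_succ]
    push_cast
    field_simp
    linear_combination succ_mul_residue_succ hN m c

end BinomialResidue

open BinomialResidue in
/-- The residue at `x = 0` of `x^a (1+x)^(N-1+b) / ((1+x)^N - 1)^(c+1)` equals
`(1/N) Σ_{p=0}^{a} (-1)^(a-p) C((b+p)/N, c) C(a, p)`.  The residue is encoded as the
`x^c` coefficient of the power series `g` with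
`g ⬝ ((1+x)^N - 1)^(c+1) = x^(a+c+1) (1+x)^(N-1+b)` (such `g` is unique). -/
theorem stmt10 (a b c N : ℕ) (hN : 0 < N) (g : PowerSeries ℚ)
    (hg : g * ((1 + PowerSeries.X) ^ N - 1) ^ (c + 1)
        = PowerSeries.X ^ (a + c + 1) * (1 + PowerSeries.X) ^ (N - 1 + b)) :
    PowerSeries.coeff (R := ℚ) c g
      = (1 / (N : ℚ)) * ∑ p ∈ Finset.range (a + 1),
          (-1) ^ (a - p) * ((descPochhammer ℚ c).eval (((b : ℚ) + p) / N) / c !)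
            * a.choose p := by
  have hNQ : (N : ℚ) ≠ 0 := by positivity
  have hg' : g = X ^ a * (1 + X) ^ (N - 1 + b) * (geomSum N)⁻¹ ^ (c + 1) := by
    refine eq_mul_inv_pow_of_mul_X_mul_pow_eq (by rwa [constantCoeff_geomSum]) ?_
    rw [X_mul_geomSum, hg]
    ring
  rw [hg', coeff_X_pow_mul_eq_sum_residue, mul_sum]
  refine sum_congr rfl fun p _ => ?_
  rw [← Nat.cast_add, ← mul_residue hNQ]
  field_simp
end
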